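/- Let x ∈ ℝ^m have support N := {i : x_i ≠ 0}, let T ⊆ {1,…,m}, Δ := N \ T, Δ_e := T \ N, and y = A x + w with ‖w‖₂ ≤ ε. Assume |N| ≤ S_N, |Δ_e| ≤ S_{Δe}, |Δ| ≤ S_Δ, and that some δ < (√2 − 1)/2 is an (S_N + S_{Δe} + S_Δ)-restricted isometry bound for A. Let x̂ be a modified-CS estimate with known part T from y, let α_add ≥ 0, and let Δ₁ := {i ∈ Δ : |x_i| ≥ b₁}. If b₁ > α_add + 8.79ε, then every i ∈ Δ₁ satisfies |x̂_i| > α_add, i.e., every element of Δ₁ is detected by the threshold-α_add addition step. -/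

import Mathlib

open Finset

attribute [local instance] Classical.propDecidable

/-- Euclidean (ℓ2) norm of a finite real vector. -/
noncomputable def norm2 {k : ℕ} (v : Fin k → ℝ) : ℝ := Real.sqrt (∑ i, v i ^ 2)

/-- ℓ∞ norm (maximum absolute entry) of a finite real vector. -/
noncomputable def normInf {k : ℕ} (v : Fin k → ℝ) : ℝ := ⨆ i, |v i|

/-- Support of a vector, as a finset. -/
noncomputable def spt {k : ℕ} (v : Fin k → ℝ) : Finset (Fin k) :=
  Finset.univ.filter (fun i => v i ≠ 0)

/-- Restriction of a vector to the coordinates indexed by `T` (zero elsewhere). -/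
noncomputable def restr {k : ℕ} (T : Finset (Fin k)) (v : Fin k → ℝ) : Fin k → ℝ :=
  fun i => if i ∈ T then v i else 0

/-- `δ ∈ [0,1)` is an `S`-restricted isometry bound for `A`:
`(1-δ)‖z‖² ≤ ‖Az‖² ≤ (1+δ)‖z‖²` for every `z` with at most `S` nonzero entries. -/
def RIPBound {n m : ℕ} (A : Matrix (Fin n) (Fin m) ℝ) (S : ℕ) (δ : ℝ) : Prop :=
  0 ≤ δ ∧ δ < 1 ∧
    ∀ z : Fin m → ℝ, (spt z).card ≤ S →
      (1 - δ) * (∑ i, z i ^ 2) ≤ (∑ j, (A.mulVec z) j ^ 2) ∧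
      (∑ j, (A.mulVec z) j ^ 2) ≤ (1 + δ) * (∑ i, z i ^ 2)

/-- `θ ≥ 0` is an `(S,S')`-restricted orthogonality bound for `A`:
`|⟨Az, Az'⟩| ≤ θ‖z‖‖z'‖` for all `z, z'` with disjoint supports of cardinalities `≤ S, S'`. -/
def ROBound {n m : ℕ} (A : Matrix (Fin n) (Fin m) ℝ) (S S' : ℕ) (θ : ℝ) : Prop :=
  0 ≤ θ ∧
    ∀ z z' : Fin m → ℝ, Disjoint (spt z) (spt z') →
      (spt z).card ≤ S → (spt z').card ≤ S' →
      |∑ j, (A.mulVec z) j * (A.mulVec z') j| ≤ θ * norm2 z * norm2 z'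

/-- A modified-CS estimate with known part `T`: feasible and with minimal ℓ1 norm outside `T`
among all feasible vectors. -/
def ModCS {n m : ℕ} (A : Matrix (Fin n) (Fin m) ℝ) (y : Fin n → ℝ) (ε : ℝ)
    (T : Finset (Fin m)) (xhat : Fin m → ℝ) : Prop :=
  norm2 (fun j => y j - (A.mulVec xhat) j) ≤ ε ∧
    ∀ β : Fin m → ℝ, norm2 (fun j => y j - (A.mulVec β) j) ≤ ε →
      ∑ i ∈ Tᶜ, |xhat i| ≤ ∑ i ∈ Tᶜ, |β i|

/-- The LS estimate on `T` from `y`: supported on `T` and satisfying the normal equations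
`A_Tᵀ (y - A x̂) = 0` (equivalently `x̂_T = (A_Tᵀ A_T)⁻¹ A_Tᵀ y` when `A_T` has
full column rank). -/
def IsLS {n m : ℕ} (A : Matrix (Fin n) (Fin m) ℝ) (y : Fin n → ℝ)
    (T : Finset (Fin m)) (xhat : Fin m → ℝ) : Prop :=
  (∀ i, i ∉ T → xhat i = 0) ∧
    ∀ i ∈ T, (∑ j, A j i * (y j - (A.mulVec xhat) j)) = 0

/-- `C₁(δ) = 4√(1+δ)/(1-(√2+1)δ)`. -/
noncomputable def C1 (δ : ℝ) : ℝ := 4 * Real.sqrt (1 + δ) / (1 - (Real.sqrt 2 + 1) * δ)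

/-- `C₂(δ) = 2(1+(√2-1)δ)/(1-(√2+1)δ)`. -/
noncomputable def C2 (δ : ℝ) : ℝ := 2 * (1 + (Real.sqrt 2 - 1) * δ) / (1 - (Real.sqrt 2 + 1) * δ)

/-! With `h = x̂ - x`, `T₀ = T ∪ supp x` and `Δ = supp x \ T`: both `x` and `x̂` are feasible, so
`‖A h‖ ≤ 2ε`, and the `ℓ₁`-minimality of `x̂` off `T` gives the cone condition
`‖h_{T₀ᶜ}‖₁ ≤ ‖h_Δ‖₁ ≤ √|Δ| ‖h_{T₀}‖`. Shelling `T₀ᶜ` into blocks of `|Δ|` entries of decreasing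
size and polarizing the restricted isometry property (Candès' argument) yields
`(1 - (√2 + 1) δ) ‖h_{T₀}‖ ≤ 2 √(1 + δ) ε`, so `‖h_{T₀}‖ ≤ C₁(δ) ε / 2 ≤ 8.79 ε` when
`δ < (√2 - 1) / 2`. On `Δ ⊆ T₀` this gives `|x̂ᵢ| ≥ |xᵢ| - |hᵢ| ≥ b₁ - 8.79 ε > α_add`. -/

open Matrix

section Norm2

variable {k : ℕ}

lemma norm2_eq_norm_toLp (v : Fin k → ℝ) : norm2 v = ‖WithLp.toLp 2 v‖ := by
  simp [norm2, EuclideanSpace.norm_eq]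

lemma norm2_nonneg (v : Fin k → ℝ) : 0 ≤ norm2 v := Real.sqrt_nonneg _

lemma sq_norm2 (v : Fin k → ℝ) : norm2 v ^ 2 = ∑ i, v i ^ 2 :=
  Real.sq_sqrt (by positivity)

lemma sq_norm2_eq_dotProduct (v : Fin k → ℝ) : norm2 v ^ 2 = v ⬝ᵥ v := by
  rw [sq_norm2]
  simp [dotProduct, sq]

lemma norm2_eq_zero {v : Fin k → ℝ} : norm2 v = 0 ↔ v = 0 := by
  simp [norm2_eq_norm_toLp]

lemma abs_le_norm2 (v : Fin k → ℝ) (i : Fin k) : |v i| ≤ norm2 v := by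
  simpa [norm2_eq_norm_toLp] using PiLp.norm_apply_le (WithLp.toLp 2 v) i

lemma norm2_sub_le (v w : Fin k → ℝ) : norm2 (v - w) ≤ norm2 v + norm2 w := by
  simpa [norm2_eq_norm_toLp] using norm_sub_le (WithLp.toLp 2 v) (WithLp.toLp 2 w)

lemma abs_dotProduct_le_norm2_mul (v w : Fin k → ℝ) : |v ⬝ᵥ w| ≤ norm2 v * norm2 w := by
  simpa [norm2_eq_norm_toLp, EuclideanSpace.inner_eq_star_dotProduct, dotProduct_comm]
    using abs_real_inner_le_norm (WithLp.toLp 2 v) (WithLp.toLp 2 w)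

end Norm2

section Restriction

variable {k : ℕ}

lemma restr_apply_of_mem {D : Finset (Fin k)} (v : Fin k → ℝ) {i : Fin k} (hi : i ∈ D) :
    restr D v i = v i := if_pos hi

lemma spt_restr_subset (D : Finset (Fin k)) (v : Fin k → ℝ) : spt (restr D v) ⊆ D := by
  intro i hi
  by_contra h
  simp [spt, restr, h] at hi

lemma restr_empty (v : Fin k → ℝ) : restr ∅ v = 0 := by
  ext i
  simp [restr]

lemma restr_union_of_disjoint {D D' : Finset (Fin k)} (hD : Disjoint D D') (v : Fin k → ℝ) :
    restr (D ∪ D') v = restr D v + restr D' v := by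
  ext i
  by_cases hi : i ∈ D
  · simp [restr, hi, disjoint_left.1 hD hi]
  · simp [restr, hi]

lemma restr_add_restr_compl (D : Finset (Fin k)) (v : Fin k → ℝ) :
    restr D v + restr Dᶜ v = v := by
  ext i
  by_cases hi : i ∈ D <;> simp [restr, hi]

lemma norm2_restr (D : Finset (Fin k)) (v : Fin k → ℝ) :
    norm2 (restr D v) = √(∑ i ∈ D, v i ^ 2) := by
  simp only [norm2, restr, ite_pow, ne_eq, OfNat.ofNat_ne_zero, not_false_eq_true, zero_pow]
  rw [sum_ite_mem, univ_inter]

lemma sq_norm2_restr (D : Finset (Fin k)) (v : Fin k → ℝ) :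
    norm2 (restr D v) ^ 2 = ∑ i ∈ D, v i ^ 2 := by
  rw [norm2_restr, Real.sq_sqrt (by positivity)]

lemma norm2_restr_mono {D D' : Finset (Fin k)} (hD : D ⊆ D') (v : Fin k → ℝ) :
    norm2 (restr D v) ≤ norm2 (restr D' v) := by
  simp only [norm2_restr]
  exact Real.sqrt_le_sqrt (sum_le_sum_of_subset_of_nonneg hD fun i _ _ => sq_nonneg _)

lemma sum_abs_le_sqrt_card_mul_norm2_restr (D : Finset (Fin k)) (v : Fin k → ℝ) :
    ∑ i ∈ D, |v i| ≤ √(#D : ℝ) * norm2 (restr D v) := by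
  rw [← Real.sqrt_sq (norm2_nonneg _), ← Real.sqrt_mul (Nat.cast_nonneg _), sq_norm2_restr]
  refine Real.le_sqrt_of_sq_le ?_
  simpa using sq_sum_le_card_mul_sum_sq (s := D) (f := fun i => |v i|)

lemma norm2_restr_le_sqrt_mul {D : Finset (Fin k)} {s : ℕ} (hD : #D ≤ s) {v : Fin k → ℝ}
    {t : ℝ} (ht : 0 ≤ t) (hv : ∀ i ∈ D, |v i| ≤ t) : norm2 (restr D v) ≤ √s * t := by
  rw [← Real.sqrt_sq (norm2_nonneg _), ← Real.sqrt_sq ht, ← Real.sqrt_mul (Nat.cast_nonneg _)]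
  refine Real.sqrt_le_sqrt ?_
  calc norm2 (restr D v) ^ 2 = ∑ i ∈ D, |v i| ^ 2 := by simp [sq_norm2_restr]
    _ ≤ ∑ _i ∈ D, t ^ 2 := sum_le_sum fun i hi => pow_le_pow_left₀ (abs_nonneg _) (hv i hi) 2
    _ = #D * t ^ 2 := by simp
    _ ≤ s * t ^ 2 := by gcongr

end Restriction

section Support

variable {k : ℕ}

lemma spt_add_subset (z z' : Fin k → ℝ) : spt (z + z') ⊆ spt z ∪ spt z' := by
  intro i
  simp only [spt, mem_filter, mem_univ, true_and, mem_union, Pi.add_apply]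
  contrapose!
  rintro ⟨hz, hz'⟩
  simp [hz, hz']

lemma spt_smul_subset (a : ℝ) (z : Fin k → ℝ) : spt (a • z) ⊆ spt z := by
  intro i
  simp only [spt, mem_filter, mem_univ, true_and, Pi.smul_apply, smul_eq_mul]
  exact right_ne_zero_of_mul

lemma dotProduct_eq_zero_of_disjoint_spt {z z' : Fin k → ℝ} (h : Disjoint (spt z) (spt z')) :
    z ⬝ᵥ z' = 0 := by
  refine sum_eq_zero fun i _ => ?_
  by_contra hi
  have hz : i ∈ spt z := by simpa [spt] using left_ne_zero_of_mul hi
  exact disjoint_left.1 h hz (by simpa [spt] using right_ne_zero_of_mul hi)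

end Support

namespace RIPBound

variable {n m : ℕ} {A : Matrix (Fin n) (Fin m) ℝ} {S : ℕ} {δ : ℝ}

lemma mono {S' : ℕ} (hR : RIPBound A S δ) (hS : S' ≤ S) : RIPBound A S' δ :=
  ⟨hR.1, hR.2.1, fun z hz => hR.2.2 z (hz.trans hS)⟩

lemma one_sub_mul_sq_norm2_le (hR : RIPBound A S δ) {z : Fin m → ℝ} (hz : #(spt z) ≤ S) :
    (1 - δ) * norm2 z ^ 2 ≤ norm2 (A *ᵥ z) ^ 2 := by
  simpa only [sq_norm2] using (hR.2.2 z hz).1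

lemma sq_norm2_mulVec_le (hR : RIPBound A S δ) {z : Fin m → ℝ} (hz : #(spt z) ≤ S) :
    norm2 (A *ᵥ z) ^ 2 ≤ (1 + δ) * norm2 z ^ 2 := by
  simpa only [sq_norm2] using (hR.2.2 z hz).2

lemma norm2_mulVec_le (hR : RIPBound A S δ) {z : Fin m → ℝ} (hz : #(spt z) ≤ S) :
    norm2 (A *ᵥ z) ≤ √(1 + δ) * norm2 z := by
  refine (sq_le_sq₀ (norm2_nonneg _) (by positivity [norm2_nonneg z])).1 ?_
  rw [mul_pow, Real.sq_sqrt (by linarith [hR.1])]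
  exact hR.sq_norm2_mulVec_le hz

/-- Polarization of the restricted isometry property along `a • z ± b • z'`. -/
lemma two_mul_mul_dotProduct_le (hR : RIPBound A S δ) {z z' : Fin m → ℝ}
    (hdisj : Disjoint (spt z) (spt z')) (hcard : #(spt z) + #(spt z') ≤ S) (a b : ℝ) :
    2 * (a * b) * ((A *ᵥ z) ⬝ᵥ (A *ᵥ z')) ≤ δ * (a ^ 2 * norm2 z ^ 2 + b ^ 2 * norm2 z' ^ 2) := by
  have hspt (c : ℝ) : #(spt (a • z + c • z')) ≤ S :=
    (card_le_card ((spt_add_subset _ _).trans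
      (union_subset_union (spt_smul_subset _ _) (spt_smul_subset _ _)))).trans
      ((card_union_le _ _).trans hcard)
  have hup := hR.sq_norm2_mulVec_le (hspt b)
  have hlow := hR.one_sub_mul_sq_norm2_le (hspt (-b))
  simp only [sq_norm2_eq_dotProduct, mulVec_add, mulVec_smul, dotProduct_add, add_dotProduct,
    dotProduct_smul, smul_dotProduct, smul_eq_mul, dotProduct_eq_zero_of_disjoint_spt hdisj,
    dotProduct_comm z' z, dotProduct_comm (A *ᵥ z') (A *ᵥ z)] at hup hlow ⊢
  nlinarith

lemma abs_dotProduct_le (hR : RIPBound A S δ) {z z' : Fin m → ℝ}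
    (hdisj : Disjoint (spt z) (spt z')) (hcard : #(spt z) + #(spt z') ≤ S) :
    |(A *ᵥ z) ⬝ᵥ (A *ᵥ z')| ≤ δ * norm2 z * norm2 z' := by
  rcases (mul_nonneg (norm2_nonneg z) (norm2_nonneg z')).eq_or_lt with h0 | hpos
  · rcases mul_eq_zero.1 h0.symm with h | h <;> obtain rfl := norm2_eq_zero.1 h <;> simp [h]
  have hplus := hR.two_mul_mul_dotProduct_le hdisj hcard (norm2 z') (norm2 z)
  have hminus := hR.two_mul_mul_dotProduct_le hdisj hcard (norm2 z') (-norm2 z)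
  refine abs_le.2 ⟨?_, ?_⟩ <;> nlinarith
  
end RIPBound

section Shelling

lemma exists_top_subset {α β : Type*} [DecidableEq α] [LinearOrder β] (g : α → β) :
    ∀ {s : ℕ} {E : Finset α}, s ≤ #E → ∃ D ⊆ E, #D = s ∧ ∀ i ∈ D, ∀ j ∈ E \ D, g j ≤ g i
  | 0, _, _ => ⟨∅, empty_subset _, rfl, by simp⟩
  | s + 1, E, hs => by
    obtain ⟨D, hDE, hD, htop⟩ := exists_top_subset g (s := s) (E := E) (by omega)
    obtain ⟨j₀, hj₀, hmax⟩ := exists_max_image (E \ D) g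
      (by rw [← card_pos, card_sdiff_of_subset hDE]; omega)
    refine ⟨insert j₀ D, insert_subset (mem_sdiff.1 hj₀).1 hDE,
      by rw [card_insert_of_notMem (mem_sdiff.1 hj₀).2, hD], fun i hi j hj => ?_⟩
    have hj' : j ∈ E \ D := by
      simp only [mem_sdiff, mem_insert, not_or] at hj ⊢
      exact ⟨hj.1, hj.2.2⟩
    rcases mem_insert.1 hi with rfl | hi
    · exact hmax j hj'
    · exact htop i hi j hj'

lemma exists_top_subset_threshold {α : Type*} [DecidableEq α] {g : α → ℝ} {E : Finset α}
    (hg : ∀ i ∈ E, 0 ≤ g i) {s : ℕ} (hs₀ : 0 < s) (hs : s ≤ #E) :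
    ∃ D ⊆ E, #D = s ∧ ∃ t, 0 ≤ t ∧ s * t ≤ ∑ i ∈ D, g i ∧ ∀ j ∈ E \ D, g j ≤ t := by
  obtain ⟨D, hDE, hD, htop⟩ := exists_top_subset g hs
  obtain ⟨i₀, hi₀, hmin⟩ := exists_min_image D g (card_pos.1 (hD ▸ hs₀))
  refine ⟨D, hDE, hD, g i₀, hg i₀ (hDE hi₀), ?_, fun j hj => htop i₀ hi₀ j hj⟩
  calc (s : ℝ) * g i₀ = ∑ _i ∈ D, g i₀ := by simp [hD]
    _ ≤ ∑ i ∈ D, g i := sum_le_sum hmin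

lemma sqrt_mul_le_div_sqrt {s t a : ℝ} (hs : 0 < s) (h : s * t ≤ a) : √s * t ≤ a / √s := by
  rwa [le_div_iff₀ (Real.sqrt_pos.2 hs), mul_right_comm, Real.mul_self_sqrt hs.le]

variable {m : ℕ} {s : ℕ} (h : Fin m → ℝ)

/-- Shelling: cut `G` into blocks of `s` entries of decreasing size; the block bounds
telescope, each block's `√s`-scaled sup norm being paid by the `ℓ₁` mass of the previous one. -/
lemma abs_map_restr_le_of_forall_card_le (f : (Fin m → ℝ) →+ ℝ) {c : ℝ} (hc : 0 ≤ c)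
    (hs : 0 < s) {G : Finset (Fin m)}
    (hblock : ∀ D ⊆ G, #D ≤ s → |f (restr D h)| ≤ c * norm2 (restr D h))
    {t : ℝ} (ht : 0 ≤ t) (hGt : ∀ i ∈ G, |h i| ≤ t) :
    |f (restr G h)| ≤ c * (√s * t + (∑ i ∈ G, |h i|) / √s) := by
  induction G using strongInduction generalizing t with
  | H G ih =>
  by_cases hG : #G ≤ s
  · calc |f (restr G h)| ≤ c * norm2 (restr G h) := hblock G subset_rfl hG
      _ ≤ c * (√s * t) := by gcongr; exact norm2_restr_le_sqrt_mul hG ht hGt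
      _ ≤ _ := by gcongr; exact le_add_of_nonneg_right (by positivity)
  obtain ⟨D, hDG, hD, t', ht'₀, hDt', ht'⟩ :=
    exists_top_subset_threshold (fun i _ => abs_nonneg (h i)) hs (not_le.1 hG).le
  have hrest := ih (G \ D) (sdiff_ssubset hDG (card_pos.1 (hD ▸ hs)))
    (fun D' hD' => hblock D' (hD'.trans sdiff_subset)) ht'₀ ht'
  have hfirst : |f (restr D h)| ≤ c * (√s * t) :=
    (hblock D hDG hD.le).trans (by
      gcongr; exact norm2_restr_le_sqrt_mul hD.le ht fun i hi => hGt i (hDG hi))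
  have hshift := sqrt_mul_le_div_sqrt (Nat.cast_pos.2 hs) hDt'
  rw [← union_sdiff_of_subset hDG, restr_union_of_disjoint disjoint_sdiff, map_add,
    sum_union disjoint_sdiff, add_div]
  calc |f (restr D h) + f (restr (G \ D) h)|
      ≤ |f (restr D h)| + |f (restr (G \ D) h)| := abs_add_le _ _
    _ ≤ c * (√s * t) + c * (√s * t' + (∑ i ∈ G \ D, |h i|) / √s) := add_le_add hfirst hrest
    _ ≤ _ := by nlinarith [mul_le_mul_of_nonneg_left hshift hc]

lemma exists_subset_abs_map_restr_sdiff_le (hs : 0 < s) (G : Finset (Fin m)) :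
    ∃ D ⊆ G, #D ≤ s ∧ ∀ (f : (Fin m → ℝ) →+ ℝ) (c : ℝ), 0 ≤ c →
      (∀ D' ⊆ G \ D, #D' ≤ s → |f (restr D' h)| ≤ c * norm2 (restr D' h)) →
      |f (restr (G \ D) h)| ≤ c * ((∑ i ∈ G, |h i|) / √s) := by
  by_cases hG : #G ≤ s
  · refine ⟨G, subset_rfl, hG, fun f c hc _ => ?_⟩
    rw [sdiff_self, bot_eq_empty, restr_empty, map_zero, abs_zero]
    positivity
  obtain ⟨D, hDG, hD, t, ht₀, hDt, ht⟩ :=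
    exists_top_subset_threshold (fun i _ => abs_nonneg (h i)) hs (not_le.1 hG).le
  refine ⟨D, hDG, hD.le, fun f c hc hblock => ?_⟩
  have hshift := sqrt_mul_le_div_sqrt (Nat.cast_pos.2 hs) hDt
  calc |f (restr (G \ D) h)| ≤ c * (√s * t + (∑ i ∈ G \ D, |h i|) / √s) :=
        abs_map_restr_le_of_forall_card_le h f hc hs hblock ht₀ ht
    _ ≤ c * ((∑ i ∈ D, |h i|) / √s + (∑ i ∈ G \ D, |h i|) / √s) := by gcongr
    _ = c * ((∑ i ∈ G, |h i|) / √s) := by rw [← add_div, add_comm, sum_sdiff hDG]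

end Shelling

lemma add_le_sqrt_two_mul_of_sq_add_sq_eq {a b c : ℝ} (ha : 0 ≤ a) (hb : 0 ≤ b) (hc : 0 ≤ c)
    (h : a ^ 2 + b ^ 2 = c ^ 2) : a + b ≤ √2 * c := by
  refine (sq_le_sq₀ (by positivity) (by positivity)).1 ?_
  rw [mul_pow, Real.sq_sqrt zero_le_two]
  nlinarith [sq_nonneg (a - b)]

namespace RIPBound

variable {n m : ℕ} {A : Matrix (Fin n) (Fin m) ℝ} {S : ℕ} {δ : ℝ}

lemma exists_subset_abs_dotProduct_restr_sdiff_le (hR : RIPBound A S δ) {s : ℕ} (hs : 0 < s)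
    (h : Fin m → ℝ) (G : Finset (Fin m)) :
    ∃ D ⊆ G, #D ≤ s ∧ ∀ v : Fin m → ℝ, Disjoint (spt v) (G \ D) → #(spt v) + s ≤ S →
      |(A *ᵥ v) ⬝ᵥ (A *ᵥ restr (G \ D) h)| ≤ δ * norm2 v * ((∑ i ∈ G, |h i|) / √s) := by
  obtain ⟨D, hDG, hD, htail⟩ := exists_subset_abs_map_restr_sdiff_le h hs G
  refine ⟨D, hDG, hD, fun v hvG hv => ?_⟩
  let f : (Fin m → ℝ) →+ ℝ :=
    AddMonoidHom.mk' (fun z => (A *ᵥ v) ⬝ᵥ (A *ᵥ z)) fun z z' => by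
      simp only [mulVec_add, dotProduct_add]
  refine htail f _ (mul_nonneg hR.1 (norm2_nonneg v)) fun D' hD' hD's =>
    hR.abs_dotProduct_le (hvG.mono_right ((spt_restr_subset _ _).trans hD')) ?_
  calc #(spt v) + #(spt (restr D' h)) ≤ #(spt v) + s := by
        gcongr; exact (card_le_card (spt_restr_subset _ _)).trans hD's
    _ ≤ S := hv

lemma one_sub_mul_sq_norm2_le_of_abs_dotProduct_le (hR : RIPBound A S δ) {u r : Fin m → ℝ}
    (hu : #(spt u) ≤ S) (hcross : |(A *ᵥ u) ⬝ᵥ (A *ᵥ r)| ≤ √2 * δ * norm2 u ^ 2) :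
    (1 - (√2 + 1) * δ) * norm2 u ^ 2 ≤ √(1 + δ) * norm2 (A *ᵥ (u + r)) * norm2 u := by
  have hAu : norm2 (A *ᵥ u) ^ 2 = (A *ᵥ u) ⬝ᵥ (A *ᵥ (u + r)) - (A *ᵥ u) ⬝ᵥ (A *ᵥ r) := by
    rw [sq_norm2_eq_dotProduct, mulVec_add, dotProduct_add]; ring
  have hinner : (A *ᵥ u) ⬝ᵥ (A *ᵥ (u + r)) ≤ √(1 + δ) * norm2 u * norm2 (A *ᵥ (u + r)) :=
    (le_abs_self _).trans ((abs_dotProduct_le_norm2_mul _ _).trans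
      (mul_le_mul_of_nonneg_right (hR.norm2_mulVec_le hu) (norm2_nonneg _)))
  linarith [hR.one_sub_mul_sq_norm2_le hu, abs_le.1 hcross]

/-- The `d` largest entries off `T` join `T`; the rest is shelled into blocks of size `d`. -/
lemma one_sub_mul_norm2_restr_le {T : Finset (Fin m)} {d : ℕ} (hR : RIPBound A (#T + d) δ)
    (hd : 0 < d) (hdT : d ≤ #T) {h : Fin m → ℝ}
    (hcone : ∑ i ∈ Tᶜ, |h i| ≤ √d * norm2 (restr T h)) :
    (1 - (√2 + 1) * δ) * norm2 (restr T h) ≤ √(1 + δ) * norm2 (A *ᵥ h) := by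
  obtain ⟨D, hDT, hD, htail⟩ := hR.exists_subset_abs_dotProduct_restr_sdiff_le hd h Tᶜ
  have hTD : Disjoint T D := disjoint_compl_right.mono_right hDT
  rw [show Tᶜ \ D = (T ∪ D)ᶜ by ext; simp] at htail
  set u := restr (T ∪ D) h
  set r := restr (T ∪ D)ᶜ h
  have hu : u = restr T h + restr D h := restr_union_of_disjoint hTD h
  have huS : #(spt u) ≤ #T + d :=
    (card_le_card (spt_restr_subset _ _)).trans ((card_union_le _ _).trans (by omega))
  have hK : (∑ i ∈ Tᶜ, |h i|) / √d ≤ norm2 u :=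
    (div_le_of_le_mul₀ (Real.sqrt_nonneg _) (norm2_nonneg _) (by linarith)).trans
      (norm2_restr_mono subset_union_left h)
  have hsplit : norm2 (restr T h) + norm2 (restr D h) ≤ √2 * norm2 u :=
    add_le_sqrt_two_mul_of_sq_add_sq_eq (norm2_nonneg _) (norm2_nonneg _) (norm2_nonneg _)
      (by simp only [u, sq_norm2_restr, sum_union hTD])
  have hcross : |(A *ᵥ u) ⬝ᵥ (A *ᵥ r)| ≤ √2 * δ * norm2 u ^ 2 := by
    have h₁ := htail (restr T h)
      (disjoint_compl_right.mono_left ((spt_restr_subset _ _).trans subset_union_left))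
      (by have := card_le_card (spt_restr_subset T h); omega)
    have h₂ := htail (restr D h)
      (disjoint_compl_right.mono_left ((spt_restr_subset _ _).trans subset_union_right))
      (by have := card_le_card (spt_restr_subset D h); omega)
    calc |(A *ᵥ u) ⬝ᵥ (A *ᵥ r)|
        ≤ |(A *ᵥ restr T h) ⬝ᵥ (A *ᵥ r)| + |(A *ᵥ restr D h) ⬝ᵥ (A *ᵥ r)| := by
          rw [hu, mulVec_add, add_dotProduct]; exact abs_add_le _ _
      _ ≤ δ * (norm2 (restr T h) + norm2 (restr D h)) * ((∑ i ∈ Tᶜ, |h i|) / √d) := by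
          linarith
      _ ≤ δ * (√2 * norm2 u) * norm2 u :=
          mul_le_mul (mul_le_mul_of_nonneg_left hsplit hR.1) hK (by positivity)
            (mul_nonneg hR.1 (mul_nonneg (Real.sqrt_nonneg _) (norm2_nonneg _)))
      _ = √2 * δ * norm2 u ^ 2 := by ring
  have hmain := hR.one_sub_mul_sq_norm2_le_of_abs_dotProduct_le huS hcross
  rw [show u + r = h from restr_add_restr_compl _ _] at hmain
  have hTu : norm2 (restr T h) ≤ norm2 u := norm2_restr_mono subset_union_left h
  have hRHS : 0 ≤ √(1 + δ) * norm2 (A *ᵥ h) := mul_nonneg (Real.sqrt_nonneg _) (norm2_nonneg _)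
  rcases (norm2_nonneg (restr T h)).eq_or_lt with h0 | hpos
  · rwa [← h0, mul_zero]
  have hu_le : (1 - (√2 + 1) * δ) * norm2 u ≤ √(1 + δ) * norm2 (A *ᵥ h) :=
    le_of_mul_le_mul_right (by nlinarith) (hpos.trans_le hTu)
  rcases le_total 0 (1 - (√2 + 1) * δ) with hX | hX
  · exact (mul_le_mul_of_nonneg_left hTu hX).trans hu_le
  · exact (mul_nonpos_of_nonpos_of_nonneg hX hpos.le).trans hRHS

end RIPBound

lemma sum_abs_sub_compl_union_spt_le {m : ℕ} {x xhat : Fin m → ℝ} {T : Finset (Fin m)}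
    (h : ∑ i ∈ Tᶜ, |xhat i| ≤ ∑ i ∈ Tᶜ, |x i|) :
    ∑ i ∈ (T ∪ spt x)ᶜ, |xhat i - x i| ≤ ∑ i ∈ spt x \ T, |xhat i - x i| := by
  have hsplit : Tᶜ = (spt x \ T) ∪ (T ∪ spt x)ᶜ := by ext i; simp; tauto
  have hdisj : Disjoint (spt x \ T) (T ∪ spt x)ᶜ :=
    disjoint_compl_right.mono_left (sdiff_subset.trans subset_union_right)
  have hx₀ (i) (hi : i ∈ (T ∪ spt x)ᶜ) : x i = 0 := by
    simp [spt] at hi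
    exact hi.2
  have hx_off : ∑ i ∈ (T ∪ spt x)ᶜ, |x i| = 0 :=
    sum_eq_zero fun i hi => by rw [hx₀ i hi, abs_zero]
  rw [hsplit, sum_union hdisj, sum_union hdisj, hx_off, add_zero] at h
  have htri : ∑ i ∈ spt x \ T, |x i| ≤ ∑ i ∈ spt x \ T, (|xhat i| + |xhat i - x i|) :=
    sum_le_sum fun i _ => by
      linarith [abs_sub_abs_le_abs_sub (x i) (xhat i), abs_sub_comm (x i) (xhat i)]
  rw [sum_add_distrib] at htri
  calc ∑ i ∈ (T ∪ spt x)ᶜ, |xhat i - x i| = ∑ i ∈ (T ∪ spt x)ᶜ, |xhat i| :=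
        sum_congr rfl fun i hi => by rw [hx₀ i hi, sub_zero]
    _ ≤ _ := by linarith

namespace ModCS

variable {n m : ℕ} {A : Matrix (Fin n) (Fin m) ℝ} {y : Fin n → ℝ} {ε δ : ℝ}
  {T : Finset (Fin m)} {x xhat : Fin m → ℝ}

lemma norm2_mulVec_sub_le (hxhat : ModCS A y ε T xhat) (hx : norm2 (y - A *ᵥ x) ≤ ε) :
    norm2 (A *ᵥ (xhat - x)) ≤ 2 * ε := by
  rw [show A *ᵥ (xhat - x) = (y - A *ᵥ x) - (y - A *ᵥ xhat) by rw [mulVec_sub]; abel]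
  exact (norm2_sub_le _ _).trans ((add_le_add hx hxhat.1).trans_eq (two_mul ε).symm)

/-- The paper's bound `‖x - x̂‖ ≤ C₁(δ) ε` comes from twice this bound on `T ∪ supp x`. -/
theorem two_mul_norm2_restr_sub_le (hxhat : ModCS A y ε T xhat)
    (hx : norm2 (y - A *ᵥ x) ≤ ε) (hΔ : (spt x \ T).Nonempty)
    (hR : RIPBound A (#(T ∪ spt x) + #(spt x \ T)) δ) (hδ : (√2 + 1) * δ < 1) :
    2 * norm2 (restr (T ∪ spt x) (xhat - x)) ≤ C1 δ * ε := by
  have hΔT : spt x \ T ⊆ T ∪ spt x := sdiff_subset.trans subset_union_right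
  have hcone : ∑ i ∈ (T ∪ spt x)ᶜ, |(xhat - x) i|
      ≤ √(#(spt x \ T) : ℝ) * norm2 (restr (T ∪ spt x) (xhat - x)) :=
    (sum_abs_sub_compl_union_spt_le (hxhat.2 x hx)).trans
      ((sum_abs_le_sqrt_card_mul_norm2_restr _ _).trans (by gcongr; exact norm2_restr_mono hΔT _))
  have hkey := hR.one_sub_mul_norm2_restr_le (card_pos.2 hΔ) (card_le_card hΔT) hcone
  have hAh := mul_le_mul_of_nonneg_left (hxhat.norm2_mulVec_sub_le hx) (Real.sqrt_nonneg (1 + δ))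
  rw [C1, div_mul_eq_mul_div, le_div_iff₀ (by linarith)]
  linarith

end ModCS

lemma sqrt_two_add_one_mul_lt {δ : ℝ} (hδ : δ < (√2 - 1) / 2) : (√2 + 1) * δ < 1 / 2 := by
  nlinarith [mul_lt_mul_of_pos_left hδ (by positivity : 0 < √2 + 1),
    Real.sq_sqrt (zero_le_two : (0 : ℝ) ≤ 2)]

lemma C1_le {δ : ℝ} (hδ₀ : 0 ≤ δ) (hδ : δ < (√2 - 1) / 2) : C1 δ ≤ 8.79 := by
  -- `1.09875 ^ 2 > (√2 + 1) / 2 > 1 + δ` and `4 * 1.09875 / (1 / 2) = 8.79`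
  have hsqrt2 : √2 < 1.4145031 := by
    nlinarith [Real.sq_sqrt (zero_le_two : (0 : ℝ) ≤ 2), Real.sqrt_nonneg 2]
  have hnum : √(1 + δ) ≤ 1.09875 := Real.sqrt_le_iff.2 ⟨by norm_num, by nlinarith⟩
  have hden := sqrt_two_add_one_mul_lt hδ
  rw [C1, div_le_iff₀ (by linarith)]
  linarith

theorem modCS_detection_condition_general {n m : ℕ} (A : Matrix (Fin n) (Fin m) ℝ)
    (x : Fin m → ℝ) (w : Fin n → ℝ) (ε δ αadd b1 : ℝ) (T : Finset (Fin m))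
    (SN SΔe SΔ : ℕ)
    (hw : norm2 w ≤ ε)
    (hN : (spt x).card ≤ SN)
    (hΔe : (T \ spt x).card ≤ SΔe)
    (hΔ : (spt x \ T).card ≤ SΔ)
    (hδ : δ < (Real.sqrt 2 - 1) / 2)
    (hRIP : RIPBound A (SN + SΔe + SΔ) δ)
    (xhat : Fin m → ℝ)
    (hxhat : ModCS A (fun j => (A.mulVec x) j + w j) ε T xhat)
    (hb1 : b1 > αadd + 8.79 * ε) :
    ∀ i ∈ spt x \ T, b1 ≤ |x i| → αadd < |xhat i| := by
  intro i hi hbi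
  have hε : 0 ≤ ε := (norm2_nonneg w).trans hw
  have hcard : #(T ∪ spt x) + #(spt x \ T) ≤ SN + SΔe + SΔ := by
    rw [← card_sdiff_add_card]; omega
  have hx : norm2 ((fun j => (A *ᵥ x) j + w j) - A *ᵥ x) ≤ ε := by
    convert hw using 2
    ext j
    simp
  have hbound := hxhat.two_mul_norm2_restr_sub_le hx ⟨i, hi⟩ (hRIP.mono hcard)
    (by linarith [sqrt_two_add_one_mul_lt hδ])
  have hi_le : |xhat i - x i| ≤ norm2 (restr (T ∪ spt x) (xhat - x)) := by
    simpa [restr_apply_of_mem _ (mem_union_right T (mem_sdiff.1 hi).1)]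
      using abs_le_norm2 (restr (T ∪ spt x) (xhat - x)) i
  have hC1 := mul_le_mul_of_nonneg_right (C1_le hRIP.1 hδ) hε
  linarith [abs_sub_abs_le_abs_sub (x i) (xhat i), abs_sub_comm (x i) (xhat i)]

/-- detection condition for the addition step of modified-CS (Lemma 3). -/
theorem modCS_detection_condition {n m : ℕ} (A : Matrix (Fin n) (Fin m) ℝ)
    (x : Fin m → ℝ) (w : Fin n → ℝ) (ε δ αadd b1 : ℝ) (T : Finset (Fin m))
    (SN SΔe SΔ : ℕ)
    (hw : norm2 w ≤ ε)
    (hN : (spt x).card ≤ SN)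
    (hΔe : (T \ spt x).card ≤ SΔe)
    (hΔ : (spt x \ T).card ≤ SΔ)
    (hδ : δ < (Real.sqrt 2 - 1) / 2)
    (hRIP : RIPBound A (SN + SΔe + SΔ) δ)
    (xhat : Fin m → ℝ)
    (hxhat : ModCS A (fun j => (A.mulVec x) j + w j) ε T xhat)
    (hαadd : 0 ≤ αadd)
    (hb1 : b1 > αadd + 8.79 * ε) :
    ∀ i ∈ spt x \ T, b1 ≤ |x i| → αadd < |xhat i| :=
  modCS_detection_condition_general A x w ε δ αadd b1 T SN SΔe SΔ hw hN hΔe hΔ hδ hRIP xhat hxhat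
    hb1
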